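/- With F(X) = AᵀS(X)A + α·tr(X)·CᵀC and S(X) = X − XB(α·tr(X)·R + BᵀXB)⁻¹BᵀX, if (A,C) is observable then for every nonzero X ⪰ 0 the n-th iterate Fⁿ(X) is positive definite. -/

import Mathlib

open Matrix
open scoped ComplexOrder

/-- The homogenized Riccati operator
`F(X) = AᵀS(X)A + α·tr(X)·CᵀC`, `S(X) = X − XB(α·tr(X)·R + BᵀXB)⁻¹BᵀX`. -/
noncomputable def riccOp {n m p : ℕ} (A : Matrix (Fin n) (Fin n) ℝ)
    (B : Matrix (Fin n) (Fin m) ℝ) (C : Matrix (Fin p) (Fin n) ℝ)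
    (R : Matrix (Fin m) (Fin m) ℝ) (α : ℝ)
    (X : Matrix (Fin n) (Fin n) ℝ) : Matrix (Fin n) (Fin n) ℝ :=
  Aᵀ * (X - X * B * ((α * X.trace) • R + Bᵀ * X * B)⁻¹ * Bᵀ * X) * A
    + (α * X.trace) • (Cᵀ * C)

/-!
Completing the square, `S(X) = (1 - BK)ᴴ X (1 - BK) + Kᴴ Q K` with `K = (Q + BᴴXB)⁻¹BᴴX`, shows
that `S(X)` is positive semidefinite with `ker S(X) = ker X`. Hence `F(X) = AᴴS(X)A + c·CᴴC`,
`c = α·tr X > 0`, is positive semidefinite and `F(X)v = 0` forces `Cv = 0` and `X(Av) = 0`. The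
iterates stay nonzero (as `C ≠ 0`), so by induction `Fᵏ(X)v = 0` forces `CAʲv = 0` for all `j < k`,
and for `k = n` observability leaves only `v = 0`.
-/

namespace Matrix

section CompletionOfSquares

variable {R ι κ : Type*} [Ring R] [StarRing R] [Fintype ι] [Fintype κ] [DecidableEq ι]

theorem sub_mul_mul_eq_conjTranspose_mul_mul_add {X : Matrix ι ι R} {B : Matrix ι κ R}
    {Q : Matrix κ κ R} {K : Matrix κ ι R} (hK : (Q + Bᴴ * X * B) * K = Bᴴ * X) :
    X - X * B * K = (1 - B * K)ᴴ * X * (1 - B * K) + Kᴴ * Q * K := by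
  have hKK : Kᴴ * (Q * K) + Kᴴ * (Bᴴ * (X * (B * K))) = Kᴴ * (Bᴴ * X) := by
    rw [← Matrix.mul_add, ← hK, Matrix.add_mul]
    simp only [Matrix.mul_assoc]
  simp only [conjTranspose_sub, conjTranspose_one, conjTranspose_mul, sub_mul, mul_sub,
    Matrix.one_mul, Matrix.mul_one, Matrix.mul_assoc]
  rw [← hKK]
  abel

end CompletionOfSquares

variable {𝕜 ι κ : Type*} [RCLike 𝕜] [Fintype ι] [Fintype κ]

theorem PosSemidef.mulVec_eq_zero_of_add_mulVec_eq_zero {P Q : Matrix ι ι 𝕜}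
    (hP : P.PosSemidef) (hQ : Q.PosSemidef) {v : ι → 𝕜} (h : (P + Q) *ᵥ v = 0) :
    P *ᵥ v = 0 ∧ Q *ᵥ v = 0 := by
  have hPQ : star v ⬝ᵥ P *ᵥ v + star v ⬝ᵥ Q *ᵥ v = 0 := by
    rw [← dotProduct_add, ← add_mulVec, h, dotProduct_zero]
  rw [← hP.dotProduct_mulVec_zero_iff, ← hQ.dotProduct_mulVec_zero_iff]
  exact (add_eq_zero_iff_of_nonneg (hP.dotProduct_mulVec_nonneg v)
    (hQ.dotProduct_mulVec_nonneg v)).1 hPQ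

theorem PosSemidef.mulVec_mulVec_eq_zero_of_conjTranspose_mul_mul {P : Matrix κ κ 𝕜}
    (hP : P.PosSemidef) (L : Matrix κ ι 𝕜) {v : ι → 𝕜} (h : (Lᴴ * P * L) *ᵥ v = 0) :
    P *ᵥ (L *ᵥ v) = 0 := by
  rw [← (hP.conjTranspose_mul_mul_same L).dotProduct_mulVec_zero_iff] at h
  rwa [← hP.dotProduct_mulVec_zero_iff, star_mulVec, ← dotProduct_mulVec, mulVec_mulVec,
    mulVec_mulVec]

theorem PosSemidef.posDef_of_mulVec_eq_zero {A : Matrix ι ι 𝕜} (hA : A.PosSemidef)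
    (h : ∀ v, A *ᵥ v = 0 → v = 0) : A.PosDef := by
  classical
  refine hA.posDef_iff_isUnit.mpr <| mulVec_injective_iff_isUnit.mp fun v w hvw => ?_
  exact sub_eq_zero.1 <| h _ <| by rw [mulVec_sub, hvw, sub_self]

theorem PosSemidef.trace_pos {A : Matrix ι ι 𝕜} (hA : A.PosSemidef) (h0 : A ≠ 0) : 0 < A.trace :=
  hA.trace_nonneg.lt_of_ne' (hA.trace_eq_zero_iff.not.mpr h0)

section Riccati

variable [DecidableEq κ] {Q : Matrix κ κ 𝕜} {B : Matrix ι κ 𝕜} {X : Matrix ι ι 𝕜}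

/-- `S(X)` of the Riccati operator, with `Q` standing for `α·tr(X)·R`. -/
noncomputable def riccatiS (Q : Matrix κ κ 𝕜) (B : Matrix ι κ 𝕜) (X : Matrix ι ι 𝕜) :
    Matrix ι ι 𝕜 :=
  X - X * B * (Q + Bᴴ * X * B)⁻¹ * Bᴴ * X

theorem exists_riccatiS_eq [DecidableEq ι] (hQ : Q.PosDef) (hX : X.PosSemidef) :
    ∃ K : Matrix κ ι 𝕜, riccatiS Q B X = (1 - B * K)ᴴ * X * (1 - B * K) + Kᴴ * Q * K := by
  have hM : IsUnit (Q + Bᴴ * X * B) := (hQ.add_posSemidef (hX.conjTranspose_mul_mul_same B)).isUnit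
  refine ⟨(Q + Bᴴ * X * B)⁻¹ * Bᴴ * X, ?_⟩
  rw [riccatiS, ← sub_mul_mul_eq_conjTranspose_mul_mul_add]
  · simp only [Matrix.mul_assoc]
  · rw [← Matrix.mul_assoc, ← Matrix.mul_assoc,
      Matrix.mul_nonsing_inv _ ((isUnit_iff_isUnit_det _).1 hM), Matrix.one_mul]

theorem PosSemidef.riccatiS (hQ : Q.PosDef) (hX : X.PosSemidef) :
    (riccatiS Q B X).PosSemidef := by
  classical
  obtain ⟨K, hK⟩ := exists_riccatiS_eq (B := B) hQ hX
  rw [hK]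
  exact (hX.conjTranspose_mul_mul_same _).add (hQ.posSemidef.conjTranspose_mul_mul_same K)

theorem riccatiS_mulVec_eq_zero_iff (hQ : Q.PosDef) (hX : X.PosSemidef) {v : ι → 𝕜} :
    riccatiS Q B X *ᵥ v = 0 ↔ X *ᵥ v = 0 := by
  classical
  refine ⟨fun h => ?_, fun h => by simp [riccatiS, sub_mulVec, ← mulVec_mulVec, h]⟩
  obtain ⟨K, hK⟩ := exists_riccatiS_eq (B := B) hQ hX
  rw [hK] at h
  obtain ⟨hX', hQ'⟩ := (hX.conjTranspose_mul_mul_same _).mulVec_eq_zero_of_add_mulVec_eq_zero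
    (hQ.posSemidef.conjTranspose_mul_mul_same K) h
  have hXv := hX.mulVec_mulVec_eq_zero_of_conjTranspose_mul_mul _ hX'
  have hQv := hQ.posSemidef.mulVec_mulVec_eq_zero_of_conjTranspose_mul_mul K hQ'
  have hKv : K *ᵥ v = 0 :=
    mulVec_injective_iff_isUnit.mpr hQ.isUnit (hQv.trans (mulVec_zero Q).symm)
  simpa [sub_mulVec, ← mulVec_mulVec, hKv] using hXv

end Riccati

end Matrix

section RiccatiOperator

variable {n m p : ℕ} (A : Matrix (Fin n) (Fin n) ℝ) (B : Matrix (Fin n) (Fin m) ℝ)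
  (C : Matrix (Fin p) (Fin n) ℝ) {R : Matrix (Fin m) (Fin m) ℝ} {α : ℝ}

theorem riccOp_eq (R : Matrix (Fin m) (Fin m) ℝ) (α : ℝ) (X : Matrix (Fin n) (Fin n) ℝ) :
    riccOp A B C R α X =
      Aᴴ * riccatiS ((α * X.trace) • R) B X * A + (α * X.trace) • (Cᴴ * C) := by
  simp only [riccOp, riccatiS, conjTranspose_eq_transpose_of_trivial]

variable {X : Matrix (Fin n) (Fin n) ℝ}

theorem posSemidef_riccOp (hα : 0 < α) (hR : R.PosDef) (hX : X.PosSemidef) (hX0 : X ≠ 0) :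
    (riccOp A B C R α X).PosSemidef := by
  have hc : 0 < α * X.trace := mul_pos hα (hX.trace_pos hX0)
  rw [riccOp_eq]
  exact ((hX.riccatiS (hR.smul hc)).conjTranspose_mul_mul_same A).add
    ((posSemidef_conjTranspose_mul_self C).smul hc.le)

theorem riccOp_mulVec_eq_zero (hα : 0 < α) (hR : R.PosDef) (hX : X.PosSemidef) (hX0 : X ≠ 0)
    {v : Fin n → ℝ} (h : riccOp A B C R α X *ᵥ v = 0) :
    C *ᵥ v = 0 ∧ X *ᵥ (A *ᵥ v) = 0 := by
  have hc : 0 < α * X.trace := mul_pos hα (hX.trace_pos hX0)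
  have hS := hX.riccatiS (B := B) (hR.smul hc)
  rw [riccOp_eq] at h
  obtain ⟨hSv, hCv⟩ := (hS.conjTranspose_mul_mul_same A).mulVec_eq_zero_of_add_mulVec_eq_zero
    ((posSemidef_conjTranspose_mul_self C).smul hc.le) h
  rw [smul_mulVec, smul_eq_zero_iff_right hc.ne', conjTranspose_mul_self_mulVec_eq_zero] at hCv
  exact ⟨hCv, (riccatiS_mulVec_eq_zero_iff (hR.smul hc) hX).1
    (hS.mulVec_mulVec_eq_zero_of_conjTranspose_mul_mul A hSv)⟩

theorem riccOp_ne_zero (hα : 0 < α) (hR : R.PosDef) (hC : C ≠ 0) (hX : X.PosSemidef)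
    (hX0 : X ≠ 0) : riccOp A B C R α X ≠ 0 := fun h =>
  hC <| ext_iff_mulVec.2 fun v =>
    (riccOp_mulVec_eq_zero A B C hα hR hX hX0 (by rw [h, zero_mulVec])).1.trans (zero_mulVec v).symm

theorem posSemidef_riccOp_iterate (hα : 0 < α) (hR : R.PosDef) (hC : C ≠ 0) (hX : X.PosSemidef)
    (hX0 : X ≠ 0) (k : ℕ) :
    ((riccOp A B C R α)^[k] X).PosSemidef ∧ (riccOp A B C R α)^[k] X ≠ 0 := by
  induction k with
  | zero => exact ⟨hX, hX0⟩
  | succ k ih =>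
    rw [Function.iterate_succ_apply']
    exact ⟨posSemidef_riccOp A B C hα hR ih.1 ih.2, riccOp_ne_zero A B C hα hR hC ih.1 ih.2⟩

theorem riccOp_iterate_mulVec_eq_zero (hα : 0 < α) (hR : R.PosDef) (hC : C ≠ 0)
    (hX : X.PosSemidef) (hX0 : X ≠ 0) (k : ℕ) {v : Fin n → ℝ}
    (h : (riccOp A B C R α)^[k] X *ᵥ v = 0) : ∀ j < k, C *ᵥ (A ^ j *ᵥ v) = 0 := by
  induction k generalizing v with
  | zero => simp
  | succ k ih =>
    obtain ⟨hY, hY0⟩ := posSemidef_riccOp_iterate A B C hα hR hC hX hX0 k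
    rw [Function.iterate_succ_apply'] at h
    obtain ⟨hCv, hYAv⟩ := riccOp_mulVec_eq_zero A B C hα hR hY hY0 h
    rintro (_ | j) hj
    · simpa using hCv
    · rw [pow_succ, ← mulVec_mulVec]
      exact ih hYAv j (by omega)

end RiccatiOperator

theorem ne_zero_of_observable {n p : ℕ} [NeZero n] {A : Matrix (Fin n) (Fin n) ℝ}
    {C : Matrix (Fin p) (Fin n) ℝ}
    (hObs : ∀ v : Fin n → ℝ, (∀ k < n, C *ᵥ ((A ^ k) *ᵥ v) = 0) → v = 0) : C ≠ 0 := by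
  rintro rfl
  simpa using hObs (Pi.single 0 1) fun k _ => zero_mulVec _

/-- If `(A,C)` is observable then the `n`-th iterate of the homogenized
Riccati operator maps every nonzero PSD matrix to a positive definite one. -/
theorem riccOp_iterate_posDef
    {n m p : ℕ} (A : Matrix (Fin n) (Fin n) ℝ) (B : Matrix (Fin n) (Fin m) ℝ)
    (C : Matrix (Fin p) (Fin n) ℝ) (R : Matrix (Fin m) (Fin m) ℝ)
    (α : ℝ) (hα : 0 < α) (hR : R.PosDef)
    (hObs : ∀ v : Fin n → ℝ, (∀ k < n, C *ᵥ ((A ^ k) *ᵥ v) = 0) → v = 0) :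
    ∀ X : Matrix (Fin n) (Fin n) ℝ, X.PosSemidef → X ≠ 0 →
      ((riccOp A B C R α)^[n] X).PosDef := by
  intro X hX hX0
  have : NeZero n := ⟨by rintro rfl; exact hX0 (Subsingleton.elim X 0)⟩
  have hC := ne_zero_of_observable hObs
  exact (posSemidef_riccOp_iterate A B C hα hR hC hX hX0 n).1.posDef_of_mulVec_eq_zero
    fun v hv => hObs v (riccOp_iterate_mulVec_eq_zero A B C hα hR hC hX hX0 n hv)
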